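/- arXiv:1602.05478 — 2 statements merged into one kernel-verified Lean document; each statement's English description precedes it below -/
import Mathlib

section
/- Let Q be a lower transition rate operator on a finite nonempty set 𝒳, and let (T_t)_{t≥0} be the associated family of operators determined by the differential equation d/dt T_t f = Q(T_t f) with T_0 f = f. Then for every t ≥ 0, T_t is a lower transition operator; that is, for all f, g ∈ 𝓛(𝒳) and all λ ≥ 0: T_t f ≥ min f pointwise, T_t(f+g) ≥ T_t f + T_t g pointwise, and T_t(λf) = λ T_t f. -/
open Filter Topology

/-- The minimum of a real-valued function on a finite nonempty type. -/
noncomputable def minf {X : Type*} [Fintype X] [Nonempty X] (f : X → ℝ) : ℝ :=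
  Finset.univ.inf' Finset.univ_nonempty f

/-- The maximum of a real-valued function on a finite nonempty type. -/
noncomputable def maxf {X : Type*} [Fintype X] [Nonempty X] (f : X → ℝ) : ℝ :=
  Finset.univ.sup' Finset.univ_nonempty f

/-- The (real-valued) indicator function of a set. -/
noncomputable def ind {X : Type*} (A : Set X) : X → ℝ := A.indicator 1

/-- The conjugate (upper) operator `f ↦ -(Q (-f))`. -/
def conjOp {X : Type*} (Q : (X → ℝ) → (X → ℝ)) : (X → ℝ) → (X → ℝ) :=
  fun f => -(Q (-f))

/-- A lower transition rate operator. -/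
def IsLTRO {X : Type*} [Fintype X] (Q : (X → ℝ) → (X → ℝ)) : Prop :=
  (∀ μ : ℝ, Q (fun _ => μ) = 0) ∧
  (∀ f g : X → ℝ, Q f + Q g ≤ Q (f + g)) ∧
  (∀ l : ℝ, 0 ≤ l → ∀ f : X → ℝ, Q (l • f) = l • Q f) ∧
  (∀ x y : X, x ≠ y → 0 ≤ Q (ind {y}) x)

/-- A lower transition operator. -/
def IsLTO {X : Type*} [Fintype X] [Nonempty X] (T : (X → ℝ) → (X → ℝ)) : Prop :=
  (∀ f : X → ℝ, ∀ x : X, minf f ≤ T f x) ∧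
  (∀ f g : X → ℝ, T f + T g ≤ T (f + g)) ∧
  (∀ l : ℝ, 0 ≤ l → ∀ f : X → ℝ, T (l • f) = l • T f)

/-- `T` is the family of operators solving `d/dt T_t f = Q (T_t f)` on `[0,∞)`
with `T_0 f = f`. -/
def IsSol {X : Type*} [Fintype X] (Q : (X → ℝ) → (X → ℝ))
    (T : ℝ → (X → ℝ) → (X → ℝ)) : Prop :=
  (∀ f : X → ℝ, T 0 f = f) ∧
  (∀ f : X → ℝ, ∀ t : ℝ, 0 ≤ t →
    HasDerivWithinAt (fun s => T s f) (Q (T t f)) (Set.Ici 0) t)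

/-- Ergodicity of a lower transition rate operator, expressed via its
associated time-dependent family `T`. -/
def ErgodicQ {X : Type*} [Fintype X] (T : ℝ → (X → ℝ) → (X → ℝ)) : Prop :=
  ∀ f : X → ℝ, ∃ c : ℝ, Tendsto (fun t => T t f) atTop (𝓝 (fun _ : X => c))

/-- Ergodicity of a lower transition operator. -/
def ErgodicT {X : Type*} [Fintype X] (T : (X → ℝ) → (X → ℝ)) : Prop :=
  ∀ f : X → ℝ, ∃ c : ℝ, Tendsto (fun n : ℕ => T^[n] f) atTop (𝓝 (fun _ : X => c))

/-- `x` is upper reachable from `y` (w.r.t. the lower transition rate operator `Q`). -/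
def upperReach {X : Type*} [Fintype X] (Q : (X → ℝ) → (X → ℝ)) (y x : X) : Prop :=
  ∃ (n : ℕ) (p : ℕ → X), p 0 = y ∧ p n = x ∧
    ∀ k : ℕ, k < n → p (k + 1) ≠ p k ∧ 0 < conjOp Q (ind {p (k + 1)}) (p k)

/-- One step of the lower-reachability construction: `A ↦ A ∪ {y ∉ A : Q(𝟙_A)(y) > 0}`. -/
def lowerStep {X : Type*} [Fintype X] (Q : (X → ℝ) → (X → ℝ)) (A : Set X) : Set X :=
  A ∪ {y : X | y ∉ A ∧ 0 < Q (ind A) y}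

/-- `A` is lower reachable from `x`: `x ∈ Aₙ` where `n` is the first index with
`Aₙ = Aₙ₊₁` (equivalently, any such index, since the sequence is determined by
recursion and increasing). -/
def lowerReach {X : Type*} [Fintype X] (Q : (X → ℝ) → (X → ℝ)) (x : X) (A : Set X) : Prop :=
  ∃ n : ℕ, (lowerStep Q)^[n] A = (lowerStep Q)^[n + 1] A ∧ x ∈ (lowerStep Q)^[n] A

/-- The set `𝒳_RA := {x : ∃ n ≥ 1, min T̄ⁿ 𝟙ₓ > 0}`. -/
noncomputable def XRA {X : Type*} [Fintype X] [Nonempty X]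
    (T : (X → ℝ) → (X → ℝ)) : Set X :=
  {x : X | ∃ n : ℕ, 0 < minf ((conjOp T)^[n + 1] (ind {x}))}

/-- A regularly absorbing lower transition operator. -/
def RegAbs {X : Type*} [Fintype X] [Nonempty X] (T : (X → ℝ) → (X → ℝ)) : Prop :=
  (XRA T).Nonempty ∧ ∀ x : X, x ∉ XRA T → ∃ n : ℕ, 0 < T^[n + 1] (ind (XRA T)) x

/-- The set `𝒳_1A := {x : min T̄ 𝟙ₓ > 0}`. -/
noncomputable def X1A {X : Type*} [Fintype X] [Nonempty X]
    (T : (X → ℝ) → (X → ℝ)) : Set X :=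
  {x : X | 0 < minf (conjOp T (ind {x}))}

/-- A 1-step absorbing lower transition operator. -/
def OneStepAbs {X : Type*} [Fintype X] [Nonempty X] (T : (X → ℝ) → (X → ℝ)) : Prop :=
  (X1A T).Nonempty ∧ ∀ x : X, x ∉ X1A T → 0 < T (ind (X1A T)) x

/-- The operator (sup) norm of a non-negatively homogeneous operator. -/
noncomputable def opN {X : Type*} [Fintype X] (Q : (X → ℝ) → (X → ℝ)) : ℝ :=
  sSup {r : ℝ | ∃ f : X → ℝ, ‖f‖ = 1 ∧ r = ‖Q f‖}

/-!
At a minimiser `y` of `g` a lower transition rate operator satisfies `Q g y ≥ 0`: write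
`g = g y + ∑ w, (g w - g y) 𝟙_w` with nonnegative coefficients and use superadditivity, positive
homogeneity and the sign of the off-diagonal rates. Hence, if `u' = Q u` and `w' ≤ Q w`, then
`(u - w)' = Q u - w' ≥ Q u - Q w ≥ Q (u - w)` is nonnegative wherever `u - w` is minimal, so
`min (u - w)` is nondecreasing and `w 0 ≤ u 0` propagates to `w t ≤ u t`. The three properties of
`T t` follow by comparing `T t f` with the constant `min f`, `T t (f + g)` with `T t f + T t g`,
and `T t (λ f)` with `λ T t f` in both directions.
-/

open Set

section Minimum

variable {X : Type*} [Fintype X] [Nonempty X]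

theorem minf_le (f : X → ℝ) (x : X) : minf f ≤ f x :=
  Finset.inf'_le _ (Finset.mem_univ x)

theorem le_minf_iff {f : X → ℝ} {c : ℝ} : c ≤ minf f ↔ ∀ x, c ≤ f x := by
  simp [minf, Finset.le_inf'_iff]

theorem minf_eq_of_forall_le {f : X → ℝ} {y : X} (hy : ∀ x, f y ≤ f x) : minf f = f y :=
  le_antisymm (minf_le f y) (le_minf_iff.2 hy)

/-- Whatever coordinate realises the minimum just after `s` already realises it at `s`, so the
minimum cannot decrease faster than a derivative that is nonnegative at minimisers. -/
theorem frequently_slope_neg_minf_lt {v v' : ℝ → X → ℝ}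
    (hv : ∀ s, 0 ≤ s → HasDerivWithinAt v (v' s) (Ici 0) s)
    (hv' : ∀ s, 0 ≤ s → ∀ y, (∀ x, v s y ≤ v s x) → 0 ≤ v' s y)
    {s : ℝ} (hs : 0 ≤ s) {r : ℝ} (hr : 0 < r) :
    ∃ᶠ z in 𝓝[>] s, slope (fun s => -minf (v s)) s z < r := by
  have hcoord : ∀ y, HasDerivWithinAt (fun u => v u y) (v' s y) (Ici 0) s :=
    hasDerivWithinAt_pi.1 (hv s hs)
  have hright : 𝓝[>] s ≤ 𝓝[Ici 0] s := nhdsWithin_mono _ fun z hz => hs.trans (le_of_lt hz)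
  have hgood : ∀ y, ∀ᶠ z in 𝓝[>] s,
      (∀ x, v z y ≤ v z x) → -r < slope (fun u => v u y) s z := by
    intro y
    by_cases hmin : ∀ x, v s y ≤ v s x
    · have hslope := (hasDerivWithinAt_iff_tendsto_slope.1 (hcoord y)).mono_left
        (nhdsWithin_mono _ fun z hz => ⟨hs.trans (le_of_lt hz), ne_of_gt hz⟩)
      exact (hslope.eventually_const_lt (by linarith [hv' s hs y hmin])).mono fun z hz _ => hz
    · obtain ⟨x, hx⟩ := not_forall.1 hmin
      have hlt : ∀ᶠ z in 𝓝[>] s, v z x < v z y :=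
        ((hcoord x).continuousWithinAt.mono_left hright).eventually_lt
          ((hcoord y).continuousWithinAt.mono_left hright) (not_le.1 hx)
      exact hlt.mono fun z hz hzmin => absurd (hzmin x) (not_le.2 hz)
  refine ((eventually_all.2 hgood).and self_mem_nhdsWithin).frequently.mono ?_
  rintro z ⟨hz, hsz : s < z⟩
  obtain ⟨y, hy⟩ := Finite.exists_min (v z)
  have hzs : 0 < z - s := sub_pos.2 hsz
  calc slope (fun s => -minf (v s)) s z = (minf (v s) - v z y) / (z - s) := by
        rw [slope_def_field, minf_eq_of_forall_le hy]; ring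
    _ ≤ (v s y - v z y) / (z - s) := by gcongr; exact minf_le _ y
    _ = -slope (fun u => v u y) s z := by rw [slope_def_field]; ring
    _ < r := by linarith [hz y hy]

theorem monotoneOn_minf_of_hasDerivWithinAt {v v' : ℝ → X → ℝ}
    (hv : ∀ s, 0 ≤ s → HasDerivWithinAt v (v' s) (Ici 0) s)
    (hv' : ∀ s, 0 ≤ s → ∀ y, (∀ x, v s y ≤ v s x) → 0 ≤ v' s y) :
    MonotoneOn (fun s => minf (v s)) (Ici 0) := by
  intro a ha b _ hab
  have hcont : ContinuousOn (fun s => -minf (v s)) (Icc a b) :=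
    (ContinuousOn.finset_inf'_apply _ fun y _ s hs =>
      (hasDerivWithinAt_pi.1 (hv s (ha.trans hs.1)) y).continuousWithinAt.mono
        fun u hu => ha.trans hu.1).neg
  have := image_le_of_liminf_slope_right_le_deriv_boundary hcont le_rfl continuousOn_const
    (fun s _ => hasDerivWithinAt_const s _ _)
    (fun s hs _ hr => frequently_slope_neg_minf_lt hv hv' (ha.trans hs.1) hr) ⟨hab, le_rfl⟩
  exact neg_le_neg_iff.1 this

end Minimum

namespace IsLTRO

variable {X : Type*} [Fintype X] {Q : (X → ℝ) → (X → ℝ)}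

theorem map_const (hQ : IsLTRO Q) (c : ℝ) : Q (fun _ => c) = 0 :=
  hQ.1 c

theorem map_zero (hQ : IsLTRO Q) : Q 0 = 0 :=
  hQ.map_const 0

theorem add_le_map_add (hQ : IsLTRO Q) (f g : X → ℝ) : Q f + Q g ≤ Q (f + g) :=
  hQ.2.1 f g

theorem map_smul (hQ : IsLTRO Q) {c : ℝ} (hc : 0 ≤ c) (f : X → ℝ) : Q (c • f) = c • Q f :=
  hQ.2.2.1 c hc f

theorem sum_le_map_sum (hQ : IsLTRO Q) {ι : Type*} (s : Finset ι) (g : ι → X → ℝ) :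
    ∑ i ∈ s, Q (g i) ≤ Q (∑ i ∈ s, g i) := by
  have := Finset.le_sum_of_subadditive (fun f => -Q f) (by simp [hQ.map_zero])
    (fun f g => by rw [← neg_add]; exact neg_le_neg (hQ.add_le_map_add f g)) s g
  simpa [Finset.sum_neg_distrib] using this

theorem sub_le (hQ : IsLTRO Q) (f g : X → ℝ) : Q (f - g) ≤ Q f - Q g := by
  have := hQ.add_le_map_add (f - g) g
  rw [sub_add_cancel] at this
  exact le_sub_iff_add_le.2 this

theorem map_single_nonneg (hQ : IsLTRO Q) [DecidableEq X] {x y : X} (hxy : x ≠ y) {c : ℝ}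
    (hc : 0 ≤ c) : 0 ≤ Q (Pi.single y c) x := by
  have hsingle : Pi.single y c = c • ind ({y} : Set X) := by
    rw [ind, Set.indicator_singleton, ← Pi.single_smul, Pi.one_apply, smul_eq_mul, mul_one]
  rw [hsingle, hQ.map_smul hc]
  exact mul_nonneg hc (hQ.2.2.2 x y hxy)

theorem nonneg_apply_of_forall_le (hQ : IsLTRO Q) {g : X → ℝ} {y : X} (hy : ∀ x, g y ≤ g x) :
    0 ≤ Q g y := by
  classical
  have hdecomp : g = (fun _ => g y) + ∑ w, Pi.single w (g w - g y) := by
    rw [Finset.univ_sum_single]; ext x; simp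
  have hsum : 0 ≤ ∑ w, Q (Pi.single w (g w - g y)) y := by
    refine Finset.sum_nonneg fun w _ => ?_
    rcases eq_or_ne y w with rfl | hyw
    · simp [hQ.map_zero]
    · exact hQ.map_single_nonneg hyw (sub_nonneg.2 (hy w))
  calc 0 ≤ ∑ w, Q (Pi.single w (g w - g y)) y := hsum
    _ ≤ Q (∑ w, Pi.single w (g w - g y)) y := by
        simpa using hQ.sum_le_map_sum Finset.univ (fun w => Pi.single w (g w - g y)) y
    _ = Q (fun _ => g y) y + Q (∑ w, Pi.single w (g w - g y)) y := by rw [hQ.map_const]; simp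
    _ ≤ Q g y := by conv_rhs => rw [hdecomp]
                    exact hQ.add_le_map_add _ _ y

theorem le_of_hasDerivWithinAt_le (hQ : IsLTRO Q) {u w w' : ℝ → X → ℝ}
    (hu : ∀ s, 0 ≤ s → HasDerivWithinAt u (Q (u s)) (Ici 0) s)
    (hw : ∀ s, 0 ≤ s → HasDerivWithinAt w (w' s) (Ici 0) s)
    (hw' : ∀ s, 0 ≤ s → w' s ≤ Q (w s)) (h0 : w 0 ≤ u 0) {t : ℝ} (ht : 0 ≤ t) :
    w t ≤ u t := by
  cases isEmpty_or_nonempty X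
  · exact fun x => isEmptyElim x
  have hmono := monotoneOn_minf_of_hasDerivWithinAt (v := u - w)
    (fun s hs => (hu s hs).sub (hw s hs)) fun s hs y hy => by
      have hmin : 0 ≤ Q (u s - w s) y := hQ.nonneg_apply_of_forall_le hy
      have hsub : Q (u s - w s) y ≤ Q (u s) y - Q (w s) y := hQ.sub_le (u s) (w s) y
      have hsubsol : w' s y ≤ Q (w s) y := hw' s hs y
      show 0 ≤ Q (u s) y - w' s y
      linarith
  have hmin : 0 ≤ minf ((u - w) t) :=
    (le_minf_iff.2 fun x => sub_nonneg.2 (h0 x)).trans (hmono self_mem_Ici ht ht)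
  exact fun x => sub_nonneg.1 (le_minf_iff.1 hmin x)

end IsLTRO

/-- For every `t ≥ 0`, `T_t` is a lower transition operator. -/
theorem stmt7 {X : Type*} [Fintype X] [Nonempty X]
    (Q : (X → ℝ) → (X → ℝ)) (hQ : IsLTRO Q)
    (T : ℝ → (X → ℝ) → (X → ℝ)) (hT : IsSol Q T) :
    ∀ t : ℝ, 0 ≤ t → IsLTO (T t) := by
  intro t ht
  obtain ⟨hT0, hT'⟩ := hT
  refine ⟨fun f x => ?_, fun f g => ?_, fun l hl f => ?_⟩
  · have hconst : ∀ s, 0 ≤ s → HasDerivWithinAt (fun (_ : ℝ) (_ : X) => minf f) 0 (Ici 0) s :=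
      fun s _ => hasDerivWithinAt_const _ _ _
    refine hQ.le_of_hasDerivWithinAt_le (hT' f) hconst (fun _ _ => (hQ.map_const _).ge) ?_ ht x
    rw [hT0]
    exact minf_le f
  · refine hQ.le_of_hasDerivWithinAt_le (hT' (f + g))
      (fun s hs => (hT' f s hs).add (hT' g s hs)) (fun _ _ => hQ.add_le_map_add _ _) ?_ ht
    show T 0 f + T 0 g ≤ T 0 (f + g)
    rw [hT0, hT0, hT0]
  · have hscaled : ∀ s, 0 ≤ s →
        HasDerivWithinAt (fun s => l • T s f) (Q (l • T s f)) (Ici 0) s := fun s hs => by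
      rw [hQ.map_smul hl]
      exact (hT' f s hs).const_smul l
    have h0 : T 0 (l • f) = l • T 0 f := by rw [hT0, hT0]
    exact le_antisymm
      (hQ.le_of_hasDerivWithinAt_le hscaled (hT' _) (fun _ _ => le_rfl) h0.le ht)
      (hQ.le_of_hasDerivWithinAt_le (hT' _) hscaled (fun _ _ => le_rfl) h0.ge ht)
end

section
/- Let Q be a lower transition rate operator on a finite nonempty set 𝒳, and let (T_t)_{t≥0} be the associated family of operators determined by the differential equation d/dt T_t f = Q(T_t f) with T_0 f = f. Consider any f ∈ 𝓛(𝒳) and x ∈ 𝒳 such that f(x) > min f. Then for all t ≥ 0: T_t f(x) > min f. -/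
open Filter Topology

/-!
Writing `m = min f`, the key estimate is `Q g x ≥ (g x - m) · Q(𝟙_x)(x)` whenever `g ≥ m`:
decompose `g = m + ∑_z (g z - m) 𝟙_z` and use superadditivity, homogeneity and the
nonnegativity of the off-diagonal rates. Applied at a minimiser of `g` it shows that the
minimum of `T_s f` cannot decrease, so `T_s f ≥ m` for all `s ≥ 0`. Applied at `x` it gives
`d/ds (T_s f x - m) ≥ q · (T_s f x - m)` with `q = Q(𝟙_x)(x)`, so `e^{-qs} (T_s f x - m)` is
nondecreasing and stays at least `f x - m > 0`.
-/

open Set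

section MinPrinciple

variable {X : Type*} [Fintype X] [Nonempty X]

lemma minf_le_s18 (g : X → ℝ) (y : X) : minf g ≤ g y :=
  Finset.inf'_le g (Finset.mem_univ y)

lemma lt_minf_iff {g : X → ℝ} {c : ℝ} : c < minf g ↔ ∀ y, c < g y := by
  simp [minf, Finset.lt_inf'_iff]

lemma continuous_minf : Continuous (minf : (X → ℝ) → ℝ) :=
  Continuous.finset_inf'_apply _ fun y _ => continuous_apply y

lemma eventually_sub_mul_lt_of_hasDerivWithinAt {g : ℝ → ℝ} {g' c r s : ℝ}
    (hg : HasDerivWithinAt g g' (Ici s) s) (hc : c ≤ g s) (hg' : g s = c → 0 ≤ g')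
    (hr : 0 < r) : ∀ᶠ z in 𝓝[>] s, c - r * (z - s) < g z := by
  rcases hc.eq_or_lt with hcs | hcs
  · have hslope : ∀ᶠ z in 𝓝[>] s, -r < slope g s z :=
      (hasDerivWithinAt_iff_tendsto_slope' (lt_irrefl s)).1 hg.Ioi_of_Ici
        (Ioi_mem_nhds (by linarith [hg' hcs.symm]))
    filter_upwards [hslope, self_mem_nhdsWithin] with z hz hsz
    rw [slope_def_field, lt_div_iff₀ (sub_pos.2 hsz)] at hz
    linarith
  · have hcont : ∀ᶠ z in 𝓝[>] s, c < g z :=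
      hg.continuousWithinAt.mono Ioi_subset_Ici_self (Ioi_mem_nhds hcs)
    filter_upwards [hcont, self_mem_nhdsWithin] with z hz hsz
    nlinarith [sub_pos.2 (show s < z from hsz)]

lemma minf_le_minf_of_hasDerivWithinAt {u u' : ℝ → X → ℝ} {a t : ℝ}
    (hu : ∀ s, a ≤ s → HasDerivWithinAt u (u' s) (Ici a) s)
    (hmin : ∀ s, a ≤ s → ∀ y, u s y = minf (u s) → 0 ≤ u' s y) (hat : a ≤ t) :
    minf (u a) ≤ minf (u t) := by
  have hcont : ContinuousOn (fun s => -minf (u s)) (Icc a t) := fun s hs =>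
    (continuous_minf.continuousAt.comp_continuousWithinAt
      ((hu s hs.1).continuousWithinAt.mono Icc_subset_Ici_self)).neg
  have hslope : ∀ s ∈ Ico a t, ∀ r, (0 : ℝ) < r →
      ∃ᶠ z in 𝓝[>] s, slope (fun s => -minf (u s)) s z < r := by
    intro s hs r hr
    have hcoord : ∀ y, ∀ᶠ z in 𝓝[>] s, minf (u s) - r * (z - s) < u z y := fun y =>
      eventually_sub_mul_lt_of_hasDerivWithinAt
        (hasDerivWithinAt_pi.1 ((hu s hs.1).mono (Ici_subset_Ici.2 hs.1)) y)
        (minf_le_s18 _ y) (hmin s hs.1 y) hr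
    refine Eventually.frequently ?_
    filter_upwards [eventually_all.2 hcoord, self_mem_nhdsWithin] with z hz hsz
    rw [slope_def_field, div_lt_iff₀ (sub_pos.2 hsz)]
    linarith [lt_minf_iff.2 hz]
  have := image_le_of_liminf_slope_right_le_deriv_boundary (B := fun _ => -minf (u a))
    (B' := fun _ => 0) hcont le_rfl continuousOn_const
    (fun _ _ => hasDerivWithinAt_const _ _ _) hslope (right_mem_Icc.2 hat)
  simpa using this

end MinPrinciple

namespace IsLTRO

variable {X : Type*} [Fintype X] {Q : (X → ℝ) → (X → ℝ)}

lemma sum_le (hQ : IsLTRO Q) {ι : Type*} (s : Finset ι) (F : ι → X → ℝ) :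
    ∑ i ∈ s, Q (F i) ≤ Q (∑ i ∈ s, F i) := by
  have h := Finset.le_sum_of_subadditive (fun g => -Q g) (neg_nonpos.2 (hQ.1 0).ge)
    (fun f g => by simpa [neg_add_le_iff_le_add, ← sub_eq_add_neg] using hQ.2.1 f g) s F
  simpa [Finset.sum_neg_distrib] using h

lemma sub_mul_diag_le (hQ : IsLTRO Q) {g : X → ℝ} {c : ℝ} (hc : ∀ z, c ≤ g z) (y : X) :
    (g y - c) * Q (ind {y}) y ≤ Q g y := by
  classical
  have hdecomp : g = (fun _ => c) + ∑ z, (g z - c) • ind {z} := by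
    funext w
    simp [ind, Finset.sum_apply, Pi.single_apply]
  have hoff : 0 ≤ ∑ z ∈ Finset.univ.erase y, (g z - c) * Q (ind {z}) y :=
    Finset.sum_nonneg fun z hz =>
      mul_nonneg (sub_nonneg.2 (hc z)) (hQ.2.2.2 y z (Finset.ne_of_mem_erase hz).symm)
  calc (g y - c) * Q (ind {y}) y
      ≤ ∑ z, (g z - c) * Q (ind {z}) y := by
        rw [← Finset.add_sum_erase _ _ (Finset.mem_univ y)]; linarith
    _ = (∑ z, Q ((g z - c) • ind {z})) y := by
        simp [Finset.sum_apply, hQ.2.2.1 _ (sub_nonneg.2 (hc _))]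
    _ ≤ Q (∑ z, (g z - c) • ind {z}) y := hQ.sum_le _ _ y
    _ ≤ Q g y := by
        conv_rhs => rw [hdecomp]
        simpa [hQ.1 c] using hQ.2.1 (fun _ => c) (∑ z, (g z - c) • ind {z}) y

lemma apply_nonneg_of_eq_minf [Nonempty X] (hQ : IsLTRO Q) {g : X → ℝ} {y : X}
    (hy : g y = minf g) : 0 ≤ Q g y := by
  simpa [hy] using hQ.sub_mul_diag_le (minf_le_s18 g) y

end IsLTRO

namespace IsSol

variable {X : Type*} [Fintype X] [Nonempty X] {Q : (X → ℝ) → (X → ℝ)}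
  {T : ℝ → (X → ℝ) → (X → ℝ)}

lemma minf_le_apply (hQ : IsLTRO Q) (hT : IsSol Q T) (f : X → ℝ) {t : ℝ} (ht : 0 ≤ t)
    (y : X) : minf f ≤ T t f y := by
  have hmono := minf_le_minf_of_hasDerivWithinAt (u := fun s => T s f)
    (fun s hs => hT.2 f s hs) (fun s _ y hy => hQ.apply_nonneg_of_eq_minf hy) ht
  rw [hT.1 f] at hmono
  exact hmono.trans (minf_le_s18 _ y)

lemma monotoneOn_exp_mul_sub_minf (hQ : IsLTRO Q) (hT : IsSol Q T) (f : X → ℝ) (x : X) :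
    MonotoneOn (fun s => Real.exp (-(Q (ind {x}) x * s)) * (T s f x - minf f)) (Ici 0) := by
  set q := Q (ind {x}) x
  have hderiv : ∀ s, 0 ≤ s → HasDerivWithinAt
      (fun s => Real.exp (-(q * s)) * (T s f x - minf f))
      (Real.exp (-(q * s)) * (Q (T s f) x - q * (T s f x - minf f))) (Ici 0) s := by
    intro s hs
    have hexp : HasDerivWithinAt (fun s => Real.exp (-(q * s))) (Real.exp (-(q * s)) * -q)
        (Ici 0) s :=
      (((hasDerivAt_id s).const_mul q).neg.exp.congr_deriv (by simp)).hasDerivWithinAt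
    have hcoord := (hasDerivWithinAt_pi.1 (hT.2 f s hs) x).sub_const (minf f)
    exact (hexp.mul hcoord).congr_deriv (by ring)
  refine monotoneOn_of_hasDerivWithinAt_nonneg (convex_Ici 0)
    (f' := fun s => Real.exp (-(q * s)) * (Q (T s f) x - q * (T s f x - minf f)))
    (fun s hs => (hderiv s hs).continuousWithinAt) (fun s hs => ?_) (fun s hs => ?_)
  · rw [interior_Ici] at hs ⊢
    exact (hderiv s hs.le).mono Ioi_subset_Ici_self
  · rw [interior_Ici] at hs
    have hkey := hQ.sub_mul_diag_le (hT.minf_le_apply hQ f hs.le) x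
    exact mul_nonneg (Real.exp_pos _).le (by linarith)

end IsSol

/-- If `f(x) > min f`, then `T_t f(x) > min f` for all `t ≥ 0`. -/
theorem stmt18 {X : Type*} [Fintype X] [Nonempty X]
    (Q : (X → ℝ) → (X → ℝ)) (hQ : IsLTRO Q)
    (T : ℝ → (X → ℝ) → (X → ℝ)) (hT : IsSol Q T)
    (f : X → ℝ) (x : X) (hx : minf f < f x) :
    ∀ t : ℝ, 0 ≤ t → minf f < T t f x := by
  intro t ht
  have hmono := hT.monotoneOn_exp_mul_sub_minf hQ f x self_mem_Ici ht ht
  simp only [mul_zero, neg_zero, Real.exp_zero, one_mul, hT.1 f] at hmono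
  have hpos : 0 < Real.exp (-(Q (ind {x}) x * t)) * (T t f x - minf f) :=
    (sub_pos.2 hx).trans_le hmono
  linarith [(pos_iff_pos_of_mul_pos hpos).1 (Real.exp_pos _)]
end
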